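/- arXiv:0805.0048 — 3 statements merged into one kernel-verified Lean document; each statement's English description precedes it below -/
import Mathlib

section
/- Given a nested dyadic support tree with endpoints l_{n,k}=(2k)2^{-n}, m_{n,k}=(2k+1)2^{-n}, r_{n,k}=2(k+1)2^{-n}, and h strictly increasing continuous, the functions Φ_{n,k} defined by Φ_{n,k}(t) = L_{n,k}·f(t) on [l_{n,k}, m_{n,k}), Φ_{n,k}(t) = −R_{n,k}·f(t) on [m_{n,k}, r_{n,k}), and 0 otherwise, with L_{n,k} = √((h(r)−h(m))/((h(r)−h(l))(h(m)−h(l)))) and R_{n,k} = √((h(m)−h(l))/((h(r)−h(l))(h(r)−h(m)))), together with Φ_{0,0} = f/√(h(1)−h(0)), form an orthonormal family in L²(0,1). -/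
open MeasureTheory intervalIntegral

/-- `h(t) = ∫₀ᵗ f(u)² du`. -/
noncomputable def hFun (f : ℝ → ℝ) (t : ℝ) : ℝ := ∫ u in (0:ℝ)..t, (f u) ^ 2

/-- Left endpoint `l_{n,k} = 2k·2⁻ⁿ` of the dyadic support `S_{n,k}`. -/
noncomputable def lPt (n k : ℕ) : ℝ := (2 * k : ℝ) / 2 ^ n

/-- Midpoint `m_{n,k} = (2k+1)·2⁻ⁿ`. -/
noncomputable def mPt (n k : ℕ) : ℝ := (2 * k + 1 : ℝ) / 2 ^ n

/-- Right endpoint `r_{n,k} = 2(k+1)·2⁻ⁿ`. -/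
noncomputable def rPt (n k : ℕ) : ℝ := (2 * k + 2 : ℝ) / 2 ^ n

/-- `L_{n,k} = √((h r − h m)/((h r − h l)(h m − h l)))`. -/
noncomputable def Lcoef (f : ℝ → ℝ) (n k : ℕ) : ℝ :=
  Real.sqrt ((hFun f (rPt n k) - hFun f (mPt n k)) /
    ((hFun f (rPt n k) - hFun f (lPt n k)) * (hFun f (mPt n k) - hFun f (lPt n k))))

/-- `R_{n,k} = √((h m − h l)/((h r − h l)(h r − h m)))`. -/
noncomputable def Rcoef (f : ℝ → ℝ) (n k : ℕ) : ℝ :=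
  Real.sqrt ((hFun f (mPt n k) - hFun f (lPt n k)) /
    ((hFun f (rPt n k) - hFun f (lPt n k)) * (hFun f (rPt n k) - hFun f (mPt n k))))

/-- The auxiliary Haar-like family `Φ_{n,k}`: `Φ_{0,0} = f/√(h 1 − h 0)` and, for
`n > 0`, `L_{n,k}·f` on `[l,m)`, `−R_{n,k}·f` on `[m,r)`, `0` elsewhere. -/
noncomputable def Phi (f : ℝ → ℝ) (n k : ℕ) (t : ℝ) : ℝ :=
  if n = 0 then f t / Real.sqrt (hFun f 1 - hFun f 0)
  else if lPt n k ≤ t ∧ t < mPt n k then Lcoef f n k * f t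
  else if mPt n k ≤ t ∧ t < rPt n k then -(Rcoef f n k * f t)
  else 0

/-!
For `n ≥ 1`, `Φ_{n,k} = s·f` with the step function `s = L` on `[l, m)`, `s = -R` on `[m, r)`, so
`∫ Φ_{n,k} g = L ∫ₗᵐ f g - R ∫ₘʳ f g`. Dyadic supports are nested or disjoint, hence a coarser `Φ`
(or `Φ_{0,0}`) equals `c·f` on the support of a finer one, and since `∫ₐᵇ f² = h b - h a` the
integral of their product is `c (L (h m - h l) - R (h r - h m)) = 0`: the coefficients are
chosen exactly so that `L (h m - h l) = R (h r - h m)`. Likewise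
`∫ Φ_{n,k}² = L² (h m - h l) + R² (h r - h m) = 1`.
-/

open Set

lemma lPt_strictMono (n : ℕ) : StrictMono (lPt n) := fun a b hab => by
  unfold lPt; gcongr

lemma lPt_nonneg (n k : ℕ) : 0 ≤ lPt n k := by unfold lPt; positivity

lemma rPt_eq_lPt_succ (n k : ℕ) : rPt n k = lPt n (k + 1) := by
  unfold rPt lPt; push_cast; ring

lemma lPt_add_mul_pow (n d k : ℕ) : lPt (n + d) (k * 2 ^ d) = lPt n k := by
  unfold lPt; push_cast; rw [pow_add]; field_simp

lemma mPt_eq_lPt (n d k : ℕ) : mPt n k = lPt (n + d + 1) ((2 * k + 1) * 2 ^ d) := by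
  unfold mPt lPt; push_cast; rw [pow_succ, pow_add]; field_simp

lemma lPt_lt_mPt (n k : ℕ) : lPt n k < mPt n k := by unfold lPt mPt; gcongr; linarith

lemma mPt_lt_rPt (n k : ℕ) : mPt n k < rPt n k := by unfold mPt rPt; gcongr; linarith

lemma rPt_le_one {n k : ℕ} (hn : n ≠ 0) (hk : k < 2 ^ (n - 1)) : rPt n k ≤ 1 := by
  obtain ⟨n, rfl⟩ := Nat.exists_eq_succ_of_ne_zero hn
  have hk' : (k : ℝ) + 1 ≤ 2 ^ n := by exact_mod_cast hk
  unfold rPt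
  rw [div_le_one (by positivity), pow_succ]
  linarith

lemma dyadic_nested_or_disjoint {n k n' k' : ℕ} (h : n < n' ∨ n = n' ∧ k ≠ k') :
    rPt n' k' ≤ lPt n k ∨ (lPt n k ≤ lPt n' k' ∧ rPt n' k' ≤ mPt n k) ∨
      (mPt n k ≤ lPt n' k' ∧ rPt n' k' ≤ rPt n k) ∨ rPt n k ≤ lPt n' k' := by
  simp only [rPt_eq_lPt_succ]
  rcases h with hlt | ⟨rfl, hne⟩
  · -- all five points are grid points `lPt n' _`, so this is an order statement in `ℕ`
    obtain ⟨d, rfl⟩ := Nat.exists_eq_add_of_lt hlt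
    rw [← lPt_add_mul_pow n (d + 1) k, ← lPt_add_mul_pow n (d + 1) (k + 1), mPt_eq_lPt n d k,
      ← add_assoc]
    simp only [(lPt_strictMono _).le_iff_le]
    have h1 : k * 2 ^ (d + 1) = 2 * (k * 2 ^ d) := by ring
    have h2 : (2 * k + 1) * 2 ^ d = 2 * (k * 2 ^ d) + 2 ^ d := by ring
    have h3 : (k + 1) * 2 ^ (d + 1) = 2 * (k * 2 ^ d) + 2 * 2 ^ d := by ring
    rw [h1, h2, h3]
    omega
  · rcases hne.lt_or_gt with hkk | hkk
    · exact Or.inr <| Or.inr <| Or.inr <| (lPt_strictMono n).monotone hkk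
    · exact Or.inl <| (lPt_strictMono n).monotone hkk

section Weight

variable {f g : ℝ → ℝ} {a b c : ℝ}

lemma intervalIntegrable_sq_of_le (hf2 : IntervalIntegrable (fun u => f u ^ 2) volume 0 1)
    (ha : 0 ≤ a) (hab : a ≤ b) (hb : b ≤ 1) :
    IntervalIntegrable (fun u => f u ^ 2) volume a b :=
  hf2.mono_set <| by
    rw [uIcc_of_le zero_le_one, uIcc_of_le hab]; exact Icc_subset_Icc ha hb

lemma hFun_sub_hFun (hf2 : IntervalIntegrable (fun u => f u ^ 2) volume 0 1)
    (ha : 0 ≤ a) (hab : a ≤ b) (hb : b ≤ 1) :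
    hFun f b - hFun f a = ∫ u in a..b, f u ^ 2 :=
  integral_interval_sub_left (intervalIntegrable_sq_of_le hf2 le_rfl (ha.trans hab) hb)
    (intervalIntegrable_sq_of_le hf2 le_rfl ha (hab.trans hb))

lemma eqOn_mul_of_eqOn_const_mul {s : Set ℝ} (hg : EqOn g (fun u => c * f u) s) :
    EqOn (fun u => f u * g u) (fun u => c * f u ^ 2) s := fun u hu => by
  simp only [hg hu]; ring

lemma intervalIntegrable_mul_of_eqOn (hf2 : IntervalIntegrable (fun u => f u ^ 2) volume 0 1)
    (ha : 0 ≤ a) (hab : a ≤ b) (hb : b ≤ 1) (hg : EqOn g (fun u => c * f u) (Ioo a b)) :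
    IntervalIntegrable (fun u => f u * g u) volume a b :=
  ((intervalIntegrable_sq_of_le hf2 ha hab hb).const_mul c).congr_uIoo <| by
    rw [uIoo_of_le hab]; exact (eqOn_mul_of_eqOn_const_mul hg).symm

lemma integral_mul_of_eqOn (hf2 : IntervalIntegrable (fun u => f u ^ 2) volume 0 1)
    (ha : 0 ≤ a) (hab : a ≤ b) (hb : b ≤ 1) (hg : EqOn g (fun u => c * f u) (Ioo a b)) :
    ∫ u in a..b, f u * g u = c * (hFun f b - hFun f a) := by
  rw [integral_congr_Ioo_of_le hab (eqOn_mul_of_eqOn_const_mul hg),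
    intervalIntegral.integral_const_mul, hFun_sub_hFun hf2 ha hab hb]

end Weight

section Coefficients

variable {f : ℝ → ℝ} {n k : ℕ}

/-- Both sides equal `√(P Q / (P + Q))` with `P = h m - h l`, `Q = h r - h m`. -/
lemma Lcoef_mul_eq_Rcoef_mul (hlm : hFun f (lPt n k) < hFun f (mPt n k))
    (hmr : hFun f (mPt n k) < hFun f (rPt n k)) :
    Lcoef f n k * (hFun f (mPt n k) - hFun f (lPt n k)) =
      Rcoef f n k * (hFun f (rPt n k) - hFun f (mPt n k)) := by
  have sqrt_mul_eq (x y : ℝ) (hy : 0 ≤ y) : √x * y = √(x * y ^ 2) := by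
    rw [Real.sqrt_mul' _ (sq_nonneg y), Real.sqrt_sq hy]
  unfold Lcoef Rcoef
  rw [sqrt_mul_eq _ _ (sub_pos.2 hlm).le, sqrt_mul_eq _ _ (sub_pos.2 hmr).le]
  congr 1
  have := (sub_pos.2 hlm).ne'
  have := (sub_pos.2 hmr).ne'
  have := (sub_pos.2 (hlm.trans hmr)).ne'
  field_simp

lemma Lcoef_sq_mul_add_Rcoef_sq_mul (hlm : hFun f (lPt n k) < hFun f (mPt n k))
    (hmr : hFun f (mPt n k) < hFun f (rPt n k)) :
    Lcoef f n k ^ 2 * (hFun f (mPt n k) - hFun f (lPt n k)) +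
      Rcoef f n k ^ 2 * (hFun f (rPt n k) - hFun f (mPt n k)) = 1 := by
  have hP := sub_pos.2 hlm
  have hQ := sub_pos.2 hmr
  have hS := sub_pos.2 (hlm.trans hmr)
  unfold Lcoef Rcoef
  rw [Real.sq_sqrt (by positivity), Real.sq_sqrt (by positivity)]
  field_simp
  ring

end Coefficients

section Phi

variable {f g : ℝ → ℝ} {n k : ℕ} {t : ℝ}

lemma Phi_zero_eq (f : ℝ → ℝ) (k : ℕ) (t : ℝ) :
    Phi f 0 k t = (√(hFun f 1 - hFun f 0))⁻¹ * f t := by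
  simp [Phi, div_eq_inv_mul]

lemma Phi_of_lt_lPt (hn : n ≠ 0) (ht : t < lPt n k) : Phi f n k t = 0 := by
  have := ht.trans (lPt_lt_mPt n k)
  simp [Phi, hn, ht.not_ge, this.not_ge]

lemma Phi_of_rPt_le (hn : n ≠ 0) (ht : rPt n k ≤ t) : Phi f n k t = 0 := by
  have := (mPt_lt_rPt n k).trans_le ht
  simp [Phi, hn, ht.not_gt, this.not_gt]

lemma Phi_of_mem_Ico_lPt_mPt (hn : n ≠ 0) (ht : t ∈ Ico (lPt n k) (mPt n k)) :
    Phi f n k t = Lcoef f n k * f t := by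
  simp [Phi, hn, ht.1, ht.2]

lemma Phi_of_mem_Ico_mPt_rPt (hn : n ≠ 0) (ht : t ∈ Ico (mPt n k) (rPt n k)) :
    Phi f n k t = -Rcoef f n k * f t := by
  simp [Phi, hn, ht.1, ht.2, ht.1.not_gt]

lemma Phi_eqOn_const_mul {n' k' : ℕ} (h : n < n' ∨ n = n' ∧ k ≠ k') :
    ∃ c, EqOn (Phi f n k) (fun u => c * f u) (Ioo (lPt n' k') (rPt n' k')) := by
  rcases eq_or_ne n 0 with rfl | hn
  · exact ⟨_, fun u _ => Phi_zero_eq f k u⟩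
  rcases dyadic_nested_or_disjoint h with hd | ⟨hl, hr⟩ | ⟨hl, hr⟩ | hd
  · exact ⟨0, fun u hu => by simp [Phi_of_lt_lPt hn (hu.2.trans_le hd)]⟩
  · exact ⟨_, fun u hu => Phi_of_mem_Ico_lPt_mPt hn ⟨hl.trans hu.1.le, hu.2.trans_le hr⟩⟩
  · exact ⟨_, fun u hu => Phi_of_mem_Ico_mPt_rPt hn ⟨hl.trans hu.1.le, hu.2.trans_le hr⟩⟩
  · exact ⟨0, fun u hu => by simp [Phi_of_rPt_le hn (hd.trans hu.1.le)]⟩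

end Phi

lemma integral_eq_of_eqOn_zero_outside {F : ℝ → ℝ} {a l r b : ℝ} (hal : a ≤ l) (hrb : r ≤ b)
    (hF : IntervalIntegrable F volume l r) (hFl : EqOn F 0 (Ioo a l)) (hFr : EqOn F 0 (Ioo r b)) :
    ∫ u in a..b, F u = ∫ u in l..r, F u := by
  have hal' : IntervalIntegrable F volume a l :=
    intervalIntegrable_const.congr_uIoo (uIoo_of_le hal ▸ hFl.symm)
  have hrb' : IntervalIntegrable F volume r b :=
    intervalIntegrable_const.congr_uIoo (uIoo_of_le hrb ▸ hFr.symm)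
  rw [← integral_add_adjacent_intervals hal' (hF.trans hrb'),
    ← integral_add_adjacent_intervals hF hrb', integral_congr_Ioo_of_le hal hFl,
    integral_congr_Ioo_of_le hrb hFr]
  simp

section Orthonormality

variable {f g : ℝ → ℝ} {n k : ℕ}

lemma hFun_lPt_lt_mPt_lt_rPt (hmono : StrictMonoOn (hFun f) (Icc 0 1)) (hn : n ≠ 0)
    (hk : k < 2 ^ (n - 1)) :
    hFun f (lPt n k) < hFun f (mPt n k) ∧ hFun f (mPt n k) < hFun f (rPt n k) := by
  have := lPt_nonneg n k
  have := lPt_lt_mPt n k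
  have := mPt_lt_rPt n k
  have := rPt_le_one hn hk
  exact ⟨hmono ⟨by linarith, by linarith⟩ ⟨by linarith, by linarith⟩ (lPt_lt_mPt n k),
    hmono ⟨by linarith, by linarith⟩ ⟨by linarith, by linarith⟩ (mPt_lt_rPt n k)⟩

lemma integral_Phi_mul (hn : n ≠ 0) (hk : k < 2 ^ (n - 1))
    (hl : IntervalIntegrable (fun u => f u * g u) volume (lPt n k) (mPt n k))
    (hr : IntervalIntegrable (fun u => f u * g u) volume (mPt n k) (rPt n k)) :
    ∫ u in (0:ℝ)..1, Phi f n k u * g u =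
      Lcoef f n k * (∫ u in lPt n k..mPt n k, f u * g u) -
        Rcoef f n k * ∫ u in mPt n k..rPt n k, f u * g u := by
  have hlm := lPt_lt_mPt n k
  have hmr := mPt_lt_rPt n k
  have eq_l : EqOn (fun u => Phi f n k u * g u) (fun u => Lcoef f n k * (f u * g u))
      (Ioo (lPt n k) (mPt n k)) := fun u hu => by
    simp only [Phi_of_mem_Ico_lPt_mPt hn (Ioo_subset_Ico_self hu), mul_assoc]
  have eq_r : EqOn (fun u => Phi f n k u * g u) (fun u => -Rcoef f n k * (f u * g u))
      (Ioo (mPt n k) (rPt n k)) := fun u hu => by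
    simp only [Phi_of_mem_Ico_mPt_rPt hn (Ioo_subset_Ico_self hu), mul_assoc]
  have hl' := (hl.const_mul (Lcoef f n k)).congr_uIoo (uIoo_of_le hlm.le ▸ eq_l.symm)
  have hr' := (hr.const_mul (-Rcoef f n k)).congr_uIoo (uIoo_of_le hmr.le ▸ eq_r.symm)
  rw [integral_eq_of_eqOn_zero_outside (lPt_nonneg n k) (rPt_le_one hn hk) (hl'.trans hr')
      (fun u hu => by simp [Phi_of_lt_lPt hn hu.2])
      (fun u hu => by simp [Phi_of_rPt_le hn hu.1.le]),
    ← integral_add_adjacent_intervals hl' hr', integral_congr_Ioo_of_le hlm.le eq_l,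
    integral_congr_Ioo_of_le hmr.le eq_r, intervalIntegral.integral_const_mul,
    intervalIntegral.integral_const_mul]
  ring

lemma integral_Phi_mul_of_eqOn (hf2 : IntervalIntegrable (fun u => f u ^ 2) volume 0 1)
    (hn : n ≠ 0) (hk : k < 2 ^ (n - 1)) {c₁ c₂ : ℝ}
    (hl : EqOn g (fun u => c₁ * f u) (Ioo (lPt n k) (mPt n k)))
    (hr : EqOn g (fun u => c₂ * f u) (Ioo (mPt n k) (rPt n k))) :
    ∫ u in (0:ℝ)..1, Phi f n k u * g u =
      Lcoef f n k * (c₁ * (hFun f (mPt n k) - hFun f (lPt n k))) -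
        Rcoef f n k * (c₂ * (hFun f (rPt n k) - hFun f (mPt n k))) := by
  have hl0 := lPt_nonneg n k
  have hlm := lPt_lt_mPt n k
  have hmr := mPt_lt_rPt n k
  have hr1 := rPt_le_one hn hk
  rw [integral_Phi_mul hn hk (intervalIntegrable_mul_of_eqOn hf2 hl0 hlm.le (by linarith) hl)
      (intervalIntegrable_mul_of_eqOn hf2 (by linarith) hmr.le hr1 hr),
    integral_mul_of_eqOn hf2 hl0 hlm.le (by linarith) hl,
    integral_mul_of_eqOn hf2 (by linarith) hmr.le hr1 hr]

lemma integral_Phi_mul_eq_zero (hf2 : IntervalIntegrable (fun u => f u ^ 2) volume 0 1)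
    (hmono : StrictMonoOn (hFun f) (Icc 0 1)) (hn : n ≠ 0) (hk : k < 2 ^ (n - 1)) {c : ℝ}
    (hg : EqOn g (fun u => c * f u) (Ioo (lPt n k) (rPt n k))) :
    ∫ u in (0:ℝ)..1, Phi f n k u * g u = 0 := by
  obtain ⟨hh_lm, hh_mr⟩ := hFun_lPt_lt_mPt_lt_rPt hmono hn hk
  rw [integral_Phi_mul_of_eqOn hf2 hn hk (hg.mono (Ioo_subset_Ioo_right (mPt_lt_rPt n k).le))
    (hg.mono (Ioo_subset_Ioo_left (lPt_lt_mPt n k).le))]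
  linear_combination c * Lcoef_mul_eq_Rcoef_mul hh_lm hh_mr

lemma integral_Phi_mul_self (hf2 : IntervalIntegrable (fun u => f u ^ 2) volume 0 1)
    (hmono : StrictMonoOn (hFun f) (Icc 0 1)) (hn : n ≠ 0) (hk : k < 2 ^ (n - 1)) :
    ∫ u in (0:ℝ)..1, Phi f n k u * Phi f n k u = 1 := by
  obtain ⟨hh_lm, hh_mr⟩ := hFun_lPt_lt_mPt_lt_rPt hmono hn hk
  rw [integral_Phi_mul_of_eqOn hf2 hn hk
    (fun u hu => Phi_of_mem_Ico_lPt_mPt hn (Ioo_subset_Ico_self hu))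
    (fun u hu => Phi_of_mem_Ico_mPt_rPt hn (Ioo_subset_Ico_self hu))]
  linear_combination Lcoef_sq_mul_add_Rcoef_sq_mul hh_lm hh_mr

lemma integral_Phi_zero_mul_self (hf2 : IntervalIntegrable (fun u => f u ^ 2) volume 0 1)
    (hmono : StrictMonoOn (hFun f) (Icc 0 1)) (k : ℕ) :
    ∫ u in (0:ℝ)..1, Phi f 0 k u * Phi f 0 k u = 1 := by
  have hD : 0 < hFun f 1 - hFun f 0 :=
    sub_pos.2 (hmono ⟨le_rfl, zero_le_one⟩ ⟨zero_le_one, le_rfl⟩ one_pos)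
  calc ∫ u in (0:ℝ)..1, Phi f 0 k u * Phi f 0 k u
      = (√(hFun f 1 - hFun f 0))⁻¹ * ∫ u in (0:ℝ)..1, f u * Phi f 0 k u := by
        simp only [Phi_zero_eq f k, mul_assoc, intervalIntegral.integral_const_mul]
    _ = (√(hFun f 1 - hFun f 0))⁻¹ * ((√(hFun f 1 - hFun f 0))⁻¹ * (hFun f 1 - hFun f 0)) := by
        rw [integral_mul_of_eqOn hf2 le_rfl zero_le_one le_rfl fun u _ => Phi_zero_eq f k u]
    _ = 1 := by
        rw [← mul_assoc, ← mul_inv, Real.mul_self_sqrt hD.le, inv_mul_cancel₀ hD.ne']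

lemma integral_Phi_mul_Phi_eq_zero (hf2 : IntervalIntegrable (fun u => f u ^ 2) volume 0 1)
    (hmono : StrictMonoOn (hFun f) (Icc 0 1)) {n' k' : ℕ} (hn' : n' ≠ 0)
    (hk' : k' < 2 ^ (n' - 1)) (h : n < n' ∨ n = n' ∧ k ≠ k') :
    ∫ u in (0:ℝ)..1, Phi f n k u * Phi f n' k' u = 0 := by
  obtain ⟨c, hc⟩ := Phi_eqOn_const_mul (f := f) h
  calc ∫ u in (0:ℝ)..1, Phi f n k u * Phi f n' k' u
      = ∫ u in (0:ℝ)..1, Phi f n' k' u * Phi f n k u := integral_congr fun u _ => mul_comm _ _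
    _ = 0 := integral_Phi_mul_eq_zero hf2 hmono hn' hk' hc

end Orthonormality

theorem Phi_orthonormal_general
    (f : ℝ → ℝ)
    (hf2 : IntervalIntegrable (fun u => (f u) ^ 2) MeasureTheory.volume 0 1)
    (hmono : StrictMonoOn (hFun f) (Set.Icc 0 1)) :
    ∀ n k n' k' : ℕ, k < 2 ^ (n - 1) → k' < 2 ^ (n' - 1) →
      ∫ u in (0:ℝ)..1, Phi f n k u * Phi f n' k' u
        = if (n, k) = (n', k') then 1 else 0 := by
  intro n k n' k' hk hk'
  split_ifs with h
  · obtain ⟨rfl, rfl⟩ := Prod.ext_iff.1 h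
    rcases eq_or_ne n 0 with rfl | hn
    · exact integral_Phi_zero_mul_self hf2 hmono k
    · exact integral_Phi_mul_self hf2 hmono hn hk
  rcases lt_trichotomy n n' with hlt | rfl | hgt
  · exact integral_Phi_mul_Phi_eq_zero hf2 hmono (by omega) hk' (.inl hlt)
  · have hn : n ≠ 0 := by rintro rfl; simp_all
    exact integral_Phi_mul_Phi_eq_zero hf2 hmono hn hk' (.inr ⟨rfl, fun hkk => h (hkk ▸ rfl)⟩)
  · simpa only [mul_comm] using integral_Phi_mul_Phi_eq_zero hf2 hmono (by omega) hk (.inl hgt)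

/-- the family `Φ_{n,k}` (indices `k < 2^{n-1}`, with the
convention that `n = 0` only carries `k = 0`) is orthonormal in `L²(0,1)`. -/
theorem Phi_orthonormal
    (f : ℝ → ℝ) (hfm : Measurable f)
    (hf2 : IntervalIntegrable (fun u => (f u) ^ 2) MeasureTheory.volume 0 1)
    (hmono : StrictMonoOn (hFun f) (Set.Icc 0 1)) :
    ∀ n k n' k' : ℕ, k < 2 ^ (n - 1) → k' < 2 ^ (n' - 1) →
      ∫ u in (0:ℝ)..1, Phi f n k u * Phi f n' k' u
        = if (n, k) = (n', k') then 1 else 0 :=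
  Phi_orthonormal_general f hf2 hmono
end

section
/- Let (Φ_{n,k}) be the orthonormal family above and E_f the closure in L²(0,1) of {f·φ : φ ∈ L²(0,1)}. If the dyadic mesh satisfies sup_k |r_{n,k} − l_{n,k}| → 0, then the closed linear span of {Φ_{n,k}} equals the closure of E_f, i.e., (Φ_{n,k}) is a Hilbert basis of the closure of E_f. -/
/-!
Each `Φ_{n,k}` is `f` times a bounded step function, which gives one inclusion. Conversely,
`Φ_{n+1,k} = L·f𝟙_{[l,m)} − R·f𝟙_{[m,r)}` with `L > 0` (as `f` vanishes only on a null set), so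
`f𝟙` on the two halves of a dyadic interval is recovered from `Φ_{n+1,k}` and `f𝟙` on the whole
interval; by induction `f·s` lies in the span for every dyadic step function `s`. Every
`ψ ∈ L²(0,1)` is an `L²`-limit of continuous functions, hence, by uniform continuity, of dyadic
step functions, and multiplication by the bounded function `f` is continuous on `L²`, so `f·ψ`
lies in the closed span.
-/

open MeasureTheory intervalIntegral

open Set
open scoped ENNReal NNReal

namespace MeasureTheory.Lp

variable {α 𝕜 E : Type*} [MeasurableSpace α] {μ : Measure α} {p : ℝ≥0∞} [NormedField 𝕜]

section representatives

variable [NormedAddCommGroup E] [NormedSpace 𝕜 E]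

/-- Combining elements of `V` through their representatives avoids `MemLp` side conditions. -/
def representatives (V : Submodule 𝕜 (Lp E p μ)) : Submodule 𝕜 (α → E) where
  carrier := {F | ∃ x ∈ V, ⇑x =ᵐ[μ] F}
  zero_mem' := ⟨0, V.zero_mem, Lp.coeFn_zero E p μ⟩
  add_mem' := by
    rintro F G ⟨x, hx, hxF⟩ ⟨y, hy, hyG⟩
    exact ⟨x + y, V.add_mem hx hy, (Lp.coeFn_add x y).trans (hxF.add hyG)⟩
  smul_mem' := by
    rintro c F ⟨x, hx, hxF⟩
    exact ⟨c • x, V.smul_mem c hx, (Lp.coeFn_smul c x).trans (hxF.const_smul c)⟩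

lemma mem_representatives_of_ae_eq {V : Submodule 𝕜 (Lp E p μ)} {F G : α → E}
    (hF : F ∈ representatives V) (hFG : F =ᵐ[μ] G) : G ∈ representatives V :=
  let ⟨x, hx, hxF⟩ := hF
  ⟨x, hx, hxF.trans hFG⟩

end representatives

/-- The space `E_f = f·Lᵖ(μ)` of the paper. -/
def multiplesOf (f : α → 𝕜) : Submodule 𝕜 (Lp 𝕜 p μ) where
  carrier := {x | ∃ ψ : α → 𝕜, MemLp ψ p μ ∧ (x : α → 𝕜) =ᵐ[μ] fun u => f u * ψ u}
  zero_mem' := ⟨0, MemLp.zero, (Lp.coeFn_zero 𝕜 p μ).trans (ae_of_all _ fun u => by simp)⟩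
  add_mem' := by
    rintro x y ⟨ψ, hψ, hx⟩ ⟨φ, hφ, hy⟩
    refine ⟨ψ + φ, hψ.add hφ, ?_⟩
    filter_upwards [Lp.coeFn_add x y, hx, hy] with u hxy hxu hyu
    rw [hxy, Pi.add_apply, hxu, hyu, Pi.add_apply, mul_add]
  smul_mem' := by
    rintro c x ⟨ψ, hψ, hx⟩
    refine ⟨c • ψ, hψ.const_smul c, ?_⟩
    filter_upwards [Lp.coeFn_smul c x, hx] with u hcx hxu
    rw [hcx, Pi.smul_apply, hxu, Pi.smul_apply, smul_eq_mul, smul_eq_mul, mul_left_comm]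

lemma edist_le_of_ae_eq_mul {f ψ φ : α → 𝕜} {C : ℝ≥0} (hf : ∀ᵐ a ∂μ, ‖f a‖₊ ≤ C)
    {x y : Lp 𝕜 p μ} (hx : ⇑x =ᵐ[μ] fun a => f a * ψ a) (hy : ⇑y =ᵐ[μ] fun a => f a * φ a) :
    edist x y ≤ C * eLpNorm (ψ - φ) p μ := by
  rw [Lp.edist_def]
  refine eLpNorm_le_nnreal_smul_eLpNorm_of_ae_le_mul ?_ p
  filter_upwards [hf, hx, hy] with a hfa hxa hya
  rw [Pi.sub_apply, hxa, hya, ← mul_sub, nnnorm_mul, Pi.sub_apply]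
  gcongr

end MeasureTheory.Lp

lemma Submodule.mem_of_add_mem_of_smul_sub_smul_mem {K V : Type*} [Field K] [AddCommGroup V]
    [Module K V] (W : Submodule K V) {a b : K} (hab : a + b ≠ 0) {x y : V} (hxy : x + y ∈ W)
    (h : a • x - b • y ∈ W) : x ∈ W ∧ y ∈ W := by
  have hx : (a + b) • x = b • (x + y) + (a • x - b • y) := by module
  have hy : (a + b) • y = a • (x + y) - (a • x - b • y) := by module
  exact ⟨(W.smul_mem_iff hab).mp (hx ▸ W.add_mem (W.smul_mem b hxy) h),
    (W.smul_mem_iff hab).mp (hy ▸ W.sub_mem (W.smul_mem a hxy) h)⟩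

local notation "μ₀₁" => (volume.restrict (Ioc (0:ℝ) 1) : Measure ℝ)

noncomputable def dyadicIco (n j : ℕ) : Set ℝ := Ico ((j : ℝ) / 2 ^ n) ((j + 1) / 2 ^ n)

noncomputable def dyadicStep (n : ℕ) (c : ℕ → ℝ) : ℝ → ℝ :=
  ∑ j ∈ Finset.range (2 ^ n), (dyadicIco n j).indicator fun _ => c j

lemma mem_dyadicIco_iff {n j : ℕ} {t : ℝ} (ht : 0 ≤ t) :
    t ∈ dyadicIco n j ↔ ⌊2 ^ n * t⌋₊ = j := by
  have h2n : (0 : ℝ) < 2 ^ n := by positivity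
  rw [Nat.floor_eq_iff (by positivity), dyadicIco, mem_Ico, div_le_iff₀ h2n, lt_div_iff₀ h2n,
    mul_comm t]

lemma dyadicStep_apply (n : ℕ) (c : ℕ → ℝ) {t : ℝ} (ht : t ∈ Ico (0:ℝ) 1) :
    dyadicStep n c t = c ⌊2 ^ n * t⌋₊ := by
  have hlt : ⌊2 ^ n * t⌋₊ < 2 ^ n := by
    rw [Nat.floor_lt (by positivity [ht.1]), Nat.cast_pow, Nat.cast_ofNat]
    exact mul_lt_of_lt_one_right (by positivity) ht.2
  rw [dyadicStep, Finset.sum_apply, Finset.sum_eq_single_of_mem _ (Finset.mem_range.2 hlt)]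
  · exact indicator_of_mem ((mem_dyadicIco_iff ht.1).2 rfl) _
  · intro j _ hj
    exact indicator_of_notMem (fun h => hj ((mem_dyadicIco_iff ht.1).1 h).symm) _

lemma measurable_dyadicStep (n : ℕ) (c : ℕ → ℝ) : Measurable (dyadicStep n c) := by
  rw [dyadicStep, Finset.sum_fn]
  exact Finset.measurable_sum _ fun _ _ => measurable_const.indicator measurableSet_Ico

lemma mul_dyadicStep (f : ℝ → ℝ) (n : ℕ) (c : ℕ → ℝ) :
    (fun t => f t * dyadicStep n c t) =
      ∑ j ∈ Finset.range (2 ^ n), c j • (dyadicIco n j).indicator f := by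
  ext t
  simp only [dyadicStep, Finset.sum_apply, Finset.mul_sum, Pi.smul_apply, smul_eq_mul]
  refine Finset.sum_congr rfl fun j _ => ?_
  by_cases ht : t ∈ dyadicIco n j <;> simp [ht, mul_comm]

lemma exists_dyadicStep_dist_lt {g : ℝ → ℝ} (hg : ContinuousOn g (Icc 0 1)) {ε : ℝ} (hε : 0 < ε) :
    ∃ n, ∀ t ∈ Ico (0:ℝ) 1, dist (g t) (dyadicStep n (fun j => g (j / 2 ^ n)) t) < ε := by
  obtain ⟨δ, hδ, hgδ⟩ := Metric.uniformContinuousOn_iff.1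
    (isCompact_Icc.uniformContinuousOn_of_continuous hg) ε hε
  obtain ⟨n, hn⟩ := exists_pow_lt_of_lt_one hδ (one_half_lt_one (α := ℝ))
  refine ⟨n, fun t ht => ?_⟩
  have hj := (mem_dyadicIco_iff (n := n) ht.1).2 rfl
  rw [dyadicStep_apply n _ ht]
  refine hgδ t (Ico_subset_Icc_self ht) _ ⟨by positivity, hj.1.trans ht.2.le⟩ ?_
  rw [Real.dist_eq, abs_of_nonneg (sub_nonneg.2 hj.1)]
  have hright : ((⌊2 ^ n * t⌋₊ : ℝ) + 1) / 2 ^ n = ⌊2 ^ n * t⌋₊ / 2 ^ n + (1 / 2) ^ n := by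
    rw [one_div_pow, add_div, one_div]
  linarith [hj.2]

lemma ae_mem_Ico_zero_one : ∀ᵐ t ∂μ₀₁, t ∈ Ico (0:ℝ) 1 := by
  rw [Measure.restrict_congr_set Ico_ae_eq_Ioc.symm]
  exact ae_restrict_mem measurableSet_Ico

lemma exists_dyadicStep_eLpNorm_sub_le {p : ℝ≥0∞} (hp1 : 1 ≤ p) (hp : p ≠ ∞) {ψ : ℝ → ℝ}
    (hψ : MemLp ψ p μ₀₁) {ε : ℝ≥0∞} (hε : ε ≠ 0) :
    ∃ n c, eLpNorm (ψ - dyadicStep n c) p μ₀₁ ≤ ε := by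
  obtain ⟨g, hψg, -⟩ := hψ.exists_boundedContinuous_eLpNorm_sub_le hp (ENNReal.half_pos hε).ne'
  obtain ⟨a, -, ha, haε⟩ := ENNReal.lt_iff_exists_real_btwn.1 (ENNReal.half_pos hε)
  obtain ⟨n, hn⟩ := exists_dyadicStep_dist_lt g.continuous.continuousOn (ENNReal.ofReal_pos.1 ha)
  set step := dyadicStep n fun j => g (j / 2 ^ n)
  have hgstep : eLpNorm (⇑g - step) p μ₀₁ ≤ ENNReal.ofReal a := by
    have := eLpNorm_le_of_ae_bound (p := p) (f := ⇑g - step)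
      (ae_mem_Ico_zero_one.mono fun t ht => (hn t ht).le)
    rwa [Measure.restrict_apply_univ, Real.volume_Ioc, sub_zero, ENNReal.ofReal_one,
      ENNReal.one_rpow, one_mul] at this
  refine ⟨n, fun j => g (j / 2 ^ n), ?_⟩
  calc eLpNorm (ψ - step) p μ₀₁ = eLpNorm ((ψ - ⇑g) + (⇑g - step)) p μ₀₁ := by
        rw [sub_add_sub_cancel]
    _ ≤ eLpNorm (ψ - ⇑g) p μ₀₁ + eLpNorm (⇑g - step) p μ₀₁ :=
        eLpNorm_add_le (hψ.1.sub g.continuous.aestronglyMeasurable)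
          (g.continuous.measurable.sub (measurable_dyadicStep _ _)).aestronglyMeasurable hp1
    _ ≤ ε / 2 + ε / 2 := add_le_add hψg (hgstep.trans haε.le)
    _ = ε := ENNReal.add_halves ε

section Phi

variable {f : ℝ → ℝ}

lemma hFun_sub (hf : Continuous f) (a b : ℝ) : hFun f b - hFun f a = ∫ u in a..b, f u ^ 2 :=
  integral_interval_sub_left ((hf.pow 2).intervalIntegrable _ _)
    ((hf.pow 2).intervalIntegrable _ _)

lemma hFun_sub_pos (hf : Continuous f) (hzero : volume {t : ℝ | t ∈ Ioc (0:ℝ) 1 ∧ f t = 0} = 0)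
    {a b : ℝ} (ha : 0 ≤ a) (hab : a < b) (hb : b ≤ 1) : 0 < hFun f b - hFun f a := by
  rw [hFun_sub hf, integral_pos_iff_support_of_nonneg_ae' (ae_of_all _ fun _ => sq_nonneg _)
    ((hf.pow 2).intervalIntegrable _ _)]
  refine ⟨hab, pos_iff_ne_zero.2 fun hnull => ?_⟩
  have hcover : Ioc a b ⊆ (Function.support (fun u => f u ^ 2) ∩ Ioc a b) ∪
      {t | t ∈ Ioc (0:ℝ) 1 ∧ f t = 0} := fun t ht => by
    by_cases hft : f t = 0
    · exact Or.inr ⟨⟨ha.trans_lt ht.1, ht.2.trans hb⟩, hft⟩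
    · exact Or.inl ⟨pow_ne_zero 2 hft, ht⟩
  have := measure_mono_null hcover (measure_union_null hnull hzero)
  rw [Real.volume_Ioc, ENNReal.ofReal_eq_zero] at this
  linarith

lemma zero_le_lPt_lt_mPt_lt_rPt_le_one {n k : ℕ} (hk : k < 2 ^ n) :
    0 ≤ lPt (n + 1) k ∧ lPt (n + 1) k < mPt (n + 1) k ∧ mPt (n + 1) k < rPt (n + 1) k ∧
      rPt (n + 1) k ≤ 1 := by
  have h2 : (0:ℝ) < 2 ^ (n + 1) := by positivity
  have hk' : (2 * k + 2 : ℝ) ≤ 2 ^ (n + 1) := by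
    have : (k : ℝ) + 1 ≤ 2 ^ n := by exact_mod_cast hk
    rw [pow_succ]; linarith
  refine ⟨by unfold lPt; positivity, ?_, ?_, (div_le_one h2).2 hk'⟩ <;>
    exact div_lt_div_of_pos_right (by linarith) h2

lemma Lcoef_pos (hf : Continuous f) (hzero : volume {t : ℝ | t ∈ Ioc (0:ℝ) 1 ∧ f t = 0} = 0)
    {n k : ℕ} (hk : k < 2 ^ n) : 0 < Lcoef f (n + 1) k := by
  obtain ⟨h0, hlm, hmr, hr1⟩ := zero_le_lPt_lt_mPt_lt_rPt_le_one hk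
  have hml := hFun_sub_pos hf hzero h0 hlm (hmr.trans_le hr1).le
  have hrm := hFun_sub_pos hf hzero (h0.trans hlm.le) hmr hr1
  have hrl := hFun_sub_pos hf hzero h0 (hlm.trans hmr) hr1
  exact Real.sqrt_pos.2 (div_pos hrm (mul_pos hrl hml))

lemma dyadicIco_eq_Ico_lPt_rPt (n k : ℕ) :
    dyadicIco n k = Ico (lPt (n + 1) k) (rPt (n + 1) k) := by
  rw [dyadicIco, lPt, rPt, pow_succ]
  congr 1 <;> field_simp

lemma dyadicIco_two_mul (n k : ℕ) :
    dyadicIco (n + 1) (2 * k) = Ico (lPt (n + 1) k) (mPt (n + 1) k) := by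
  rw [dyadicIco, lPt, mPt]
  push_cast
  rfl

lemma dyadicIco_two_mul_add_one (n k : ℕ) :
    dyadicIco (n + 1) (2 * k + 1) = Ico (mPt (n + 1) k) (rPt (n + 1) k) := by
  rw [dyadicIco, mPt, rPt]
  push_cast
  ring_nf

lemma Phi_zero (f : ℝ → ℝ) (k : ℕ) :
    Phi f 0 k = (Real.sqrt (hFun f 1 - hFun f 0))⁻¹ • f := by
  ext t
  rw [Phi, if_pos rfl, Pi.smul_apply, smul_eq_mul, div_eq_inv_mul]

lemma Phi_succ (f : ℝ → ℝ) (n k : ℕ) :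
    Phi f (n + 1) k = Lcoef f (n + 1) k • (Ico (lPt (n + 1) k) (mPt (n + 1) k)).indicator f -
      Rcoef f (n + 1) k • (Ico (mPt (n + 1) k) (rPt (n + 1) k)).indicator f := by
  ext t
  simp only [Phi, Nat.succ_ne_zero, if_false, Pi.sub_apply, Pi.smul_apply, smul_eq_mul,
    indicator_apply, mem_Ico]
  split_ifs with h1 h2 <;> first | exact absurd h1.2 (not_lt.2 h2.1) | ring

end Phi

noncomputable def phiSpan (f : ℝ → ℝ) (hPhiMem : ∀ n k : ℕ, MemLp (Phi f n k) 2 μ₀₁) :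
    Submodule ℝ (Lp ℝ 2 μ₀₁) :=
  Submodule.span ℝ {x | ∃ n k : ℕ, k < 2 ^ (n - 1) ∧ x = (hPhiMem n k).toLp (Phi f n k)}

section phiSpan

variable {f : ℝ → ℝ} (hPhiMem : ∀ n k : ℕ, MemLp (Phi f n k) 2 μ₀₁)

lemma Phi_mem_multiplesOf (n k : ℕ) :
    (hPhiMem n k).toLp (Phi f n k) ∈ Lp.multiplesOf (μ := μ₀₁) f := by
  obtain ⟨φ, hφ, hΦ⟩ : ∃ φ : ℝ → ℝ, MemLp φ 2 μ₀₁ ∧ Phi f n k = fun t => f t * φ t := by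
    cases n with
    | zero =>
      refine ⟨fun _ => (Real.sqrt (hFun f 1 - hFun f 0))⁻¹, memLp_const _, ?_⟩
      ext t
      rw [Phi_zero, Pi.smul_apply, smul_eq_mul, mul_comm]
    | succ n =>
      have hind (a b : ℝ) : MemLp ((Ico a b).indicator fun _ => (1:ℝ)) 2 μ₀₁ :=
        (memLp_const 1).indicator measurableSet_Ico
      refine ⟨Lcoef f (n + 1) k • (Ico (lPt (n + 1) k) (mPt (n + 1) k)).indicator (fun _ => 1) -
        Rcoef f (n + 1) k • (Ico (mPt (n + 1) k) (rPt (n + 1) k)).indicator (fun _ => 1),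
        ((hind _ _).const_smul _).sub ((hind _ _).const_smul _), ?_⟩
      ext t
      simp only [Phi_succ, Pi.sub_apply, Pi.smul_apply, smul_eq_mul, indicator_apply]
      split_ifs <;> ring
  exact ⟨φ, hφ, hΦ ▸ (hPhiMem n k).coeFn_toLp⟩

lemma Phi_mem_representatives {n k : ℕ} (hk : k < 2 ^ (n - 1)) :
    Phi f n k ∈ Lp.representatives (phiSpan f hPhiMem) :=
  ⟨_, Submodule.subset_span ⟨n, k, hk, rfl⟩, (hPhiMem n k).coeFn_toLp⟩

lemma indicator_dyadicIco_mem_representatives (hf : Continuous f)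
    (hzero : volume {t : ℝ | t ∈ Ioc (0:ℝ) 1 ∧ f t = 0} = 0) {n j : ℕ} (hj : j < 2 ^ n) :
    (dyadicIco n j).indicator f ∈ Lp.representatives (phiSpan f hPhiMem) := by
  induction n generalizing j with
  | zero =>
    obtain rfl : j = 0 := by simpa using hj
    have hc : Real.sqrt (hFun f 1 - hFun f 0) ≠ 0 :=
      (Real.sqrt_pos.2 (hFun_sub_pos hf hzero le_rfl one_pos le_rfl)).ne'
    refine Lp.mem_representatives_of_ae_eq
      ((Lp.representatives _).smul_mem (Real.sqrt (hFun f 1 - hFun f 0))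
        (Phi_mem_representatives hPhiMem (n := 0) (k := 0) (by simp))) ?_
    filter_upwards [ae_mem_Ico_zero_one] with t ht
    rw [Phi_zero, smul_inv_smul₀ hc, indicator_of_mem (by simpa [dyadicIco] using ht)]
  | succ n ih =>
    obtain ⟨k, hjk⟩ := Nat.even_or_odd' j
    have hk : k < 2 ^ n := by rw [pow_succ] at hj; omega
    obtain ⟨-, hlm, hmr, -⟩ := zero_le_lPt_lt_mPt_lt_rPt_le_one hk
    have hLR : Lcoef f (n + 1) k + Rcoef f (n + 1) k ≠ 0 :=
      (add_pos_of_pos_of_nonneg (Lcoef_pos hf hzero hk) (Real.sqrt_nonneg _)).ne'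
    have hparent := ih hk
    rw [dyadicIco_eq_Ico_lPt_rPt, ← Ico_union_Ico_eq_Ico hlm.le hmr.le,
      indicator_union_of_disjoint Ico_disjoint_Ico_same] at hparent
    have hΦ := Phi_mem_representatives hPhiMem (n := n + 1) (k := k) (by simpa using hk)
    rw [Phi_succ] at hΦ
    obtain ⟨hleft, hright⟩ := Submodule.mem_of_add_mem_of_smul_sub_smul_mem _ hLR hparent hΦ
    rcases hjk with rfl | rfl
    · rwa [dyadicIco_two_mul]
    · rwa [dyadicIco_two_mul_add_one]

lemma mul_dyadicStep_mem_representatives (hf : Continuous f)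
    (hzero : volume {t : ℝ | t ∈ Ioc (0:ℝ) 1 ∧ f t = 0} = 0) (n : ℕ) (c : ℕ → ℝ) :
    (fun t => f t * dyadicStep n c t) ∈ Lp.representatives (phiSpan f hPhiMem) := by
  rw [mul_dyadicStep]
  exact Submodule.sum_mem _ fun j hj => Submodule.smul_mem _ _
    (indicator_dyadicIco_mem_representatives hPhiMem hf hzero (Finset.mem_range.1 hj))

lemma multiplesOf_subset_closure_phiSpan (hf : Continuous f)
    (hzero : volume {t : ℝ | t ∈ Ioc (0:ℝ) 1 ∧ f t = 0} = 0) :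
    (Lp.multiplesOf (μ := μ₀₁) (p := 2) f : Set (Lp ℝ 2 μ₀₁)) ⊆ closure (phiSpan f hPhiMem) := by
  rintro x ⟨ψ, hψ, hxψ⟩
  obtain ⟨C, hC⟩ :=
    (isCompact_Icc.image_of_continuousOn (continuous_nnnorm.comp hf).continuousOn).bddAbove
  have hfC : ∀ᵐ t ∂μ₀₁, ‖f t‖₊ ≤ C := (ae_restrict_mem measurableSet_Ioc).mono fun t ht =>
    hC (mem_image_of_mem _ (Ioc_subset_Icc_self (a := (0:ℝ)) (b := 1) ht))
  refine EMetric.mem_closure_iff.2 fun ε hε => ?_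
  obtain ⟨δ, hδ, hδC⟩ := ENNReal.exists_pos_mul_lt ENNReal.coe_ne_top hε.ne'
  obtain ⟨n, c, hψc⟩ := exists_dyadicStep_eLpNorm_sub_le one_le_two ENNReal.ofNat_ne_top hψ hδ.ne'
  obtain ⟨y, hy, hyf⟩ := mul_dyadicStep_mem_representatives hPhiMem hf hzero n c
  refine ⟨y, hy, (Lp.edist_le_of_ae_eq_mul hfC hxψ hyf).trans_lt ?_⟩
  calc (C : ℝ≥0∞) * eLpNorm (ψ - dyadicStep n c) 2 μ₀₁ ≤ C * δ := by gcongr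
    _ < ε := by rwa [mul_comm]

end phiSpan

theorem closed_span_Phi_eq_closure_Ef_general
    (f : ℝ → ℝ) (hf : Continuous f)
    (hzero : MeasureTheory.volume {t : ℝ | t ∈ Set.Ioc (0:ℝ) 1 ∧ f t = 0} = 0)
    (hPhiMem : ∀ n k : ℕ,
      MemLp (Phi f n k) 2 (MeasureTheory.volume.restrict (Set.Ioc (0:ℝ) 1))) :
    closure (↑(Submodule.span ℝ
        {x : Lp ℝ 2 (MeasureTheory.volume.restrict (Set.Ioc (0:ℝ) 1)) |
          ∃ n k : ℕ, k < 2 ^ (n - 1) ∧ x = (hPhiMem n k).toLp (Phi f n k)}) :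
        Set (Lp ℝ 2 (MeasureTheory.volume.restrict (Set.Ioc (0:ℝ) 1))))
      = closure {x : Lp ℝ 2 (MeasureTheory.volume.restrict (Set.Ioc (0:ℝ) 1)) |
          ∃ ψ : ℝ → ℝ, MemLp ψ 2 (MeasureTheory.volume.restrict (Set.Ioc (0:ℝ) 1)) ∧
            (x : ℝ → ℝ) =ᵐ[MeasureTheory.volume.restrict (Set.Ioc (0:ℝ) 1)]
              fun u => f u * ψ u} := by
  change closure (phiSpan f hPhiMem : Set (Lp ℝ 2 μ₀₁)) =
    closure (Lp.multiplesOf (μ := μ₀₁) (p := 2) f : Set (Lp ℝ 2 μ₀₁))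
  refine subset_antisymm (closure_mono (Submodule.span_le.2 ?_))
    (closure_minimal (multiplesOf_subset_closure_phiSpan hPhiMem hf hzero) isClosed_closure)
  rintro _ ⟨n, k, -, rfl⟩
  exact Phi_mem_multiplesOf hPhiMem n k

/-- if the dyadic mesh tends to `0`, the closed linear span of
the orthonormal family `(Φ_{n,k})` in `L²(0,1)` equals the closure of
`E_f = {f·ψ : ψ ∈ L²(0,1)}`, i.e. `(Φ_{n,k})` is a Hilbert basis of the
closure of `E_f`. -/
theorem closed_span_Phi_eq_closure_Ef
    (f : ℝ → ℝ) (hf : Continuous f)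
    (hzero : MeasureTheory.volume {t : ℝ | t ∈ Set.Ioc (0:ℝ) 1 ∧ f t = 0} = 0)
    (hmesh : ∀ ε > (0:ℝ), ∃ N : ℕ, ∀ n ≥ N, ∀ k < 2 ^ (n - 1),
      rPt n k - lPt n k < ε)
    (hPhiMem : ∀ n k : ℕ,
      MemLp (Phi f n k) 2 (MeasureTheory.volume.restrict (Set.Ioc (0:ℝ) 1))) :
    closure (↑(Submodule.span ℝ
        {x : Lp ℝ 2 (MeasureTheory.volume.restrict (Set.Ioc (0:ℝ) 1)) |
          ∃ n k : ℕ, k < 2 ^ (n - 1) ∧ x = (hPhiMem n k).toLp (Phi f n k)}) :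
        Set (Lp ℝ 2 (MeasureTheory.volume.restrict (Set.Ioc (0:ℝ) 1))))
      = closure {x : Lp ℝ 2 (MeasureTheory.volume.restrict (Set.Ioc (0:ℝ) 1)) |
          ∃ ψ : ℝ → ℝ, MemLp ψ 2 (MeasureTheory.volume.restrict (Set.Ioc (0:ℝ) 1)) ∧
            (x : ℝ → ℝ) =ᵐ[MeasureTheory.volume.restrict (Set.Ioc (0:ℝ) 1)]
              fun u => f u * ψ u} :=
  closed_span_Phi_eq_closure_Ef_general f hf hzero hPhiMem
end

section
/- For t, s ∈ [0,1], letting η_t(u) = χ_{[0,t]}(u)·g(t)·f(u) ∈ L²(0,1), the Parseval identity for the Hilbert basis (Φ_{n,k}) of the closure of E_f gives Σ_{n=0}^∞ Σ_{0≤k<2^{n−1}} Ψ_{n,k}(t)·Ψ_{n,k}(s) = (η_t, η_s) = g(t)·g(s)·h(min(t,s)). -/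
/-!
With `g = 1` every `Ψ_{n,k}` is nonnegative on `[0, 1]`, so it suffices to compute the partial
sums. For `0 ≤ t ≤ s ≤ 1`, `t < 1`, only the `Ψ_{N+1,k}` whose support is the dyadic interval
`[a, b)` of length `2⁻ᴺ` containing `t` is nonzero at `t`, and by induction the sum of levels
`0, …, N` is `h a + (h t − h a)(h (min s b) − h a)/(h b − h a)`: splitting `[a, b)` at its
midpoint changes this expression by exactly the level-`N+1` term, an identity that only uses the
values of `L²`, `R²` and `LR`. This expression lies between `h a` and `h t`, and `a → t`.
A general `g` factors out of every term as `g t · g s`.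
-/

open MeasureTheory intervalIntegral

/-- The Schauder-like basis `Ψ_{n,k}`: `Ψ_{0,0}(t) = g t (h t − h 0)/√(h 1 − h 0)`
and, for `n > 0`, `L_{n,k}·g(t)(h t − h l)` on `[l,m)`,
`R_{n,k}·g(t)(h r − h t)` on `[m,r)`, `0` elsewhere. -/
noncomputable def Psi (f g : ℝ → ℝ) (n k : ℕ) (t : ℝ) : ℝ :=
  if n = 0 then g t * (hFun f t - hFun f 0) / Real.sqrt (hFun f 1 - hFun f 0)
  else if lPt n k ≤ t ∧ t < mPt n k then Lcoef f n k * (g t * (hFun f t - hFun f (lPt n k)))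
  else if mPt n k ≤ t ∧ t < rPt n k then Rcoef f n k * (g t * (hFun f (rPt n k) - hFun f t))
  else 0

open Set Filter Topology

namespace PsiParseval

variable {f : ℝ → ℝ}

lemma hFun_zero (f : ℝ → ℝ) : hFun f 0 = 0 := integral_same

lemma hFun_continuous (hf : Continuous f) : Continuous (hFun f) :=
  continuous_primitive (fun _ _ => (hf.pow 2).intervalIntegrable _ _) 0

lemma hFun_monotone (hf : Continuous f) : Monotone (hFun f) := by
  intro x y hxy
  have hsq : ∀ a b, IntervalIntegrable (fun u => f u ^ 2) volume a b :=
    fun _ _ => (hf.pow 2).intervalIntegrable _ _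
  rw [← sub_nonneg, hFun, hFun, integral_interval_sub_left (hsq 0 y) (hsq 0 x)]
  exact integral_nonneg hxy fun u _ => sq_nonneg (f u)

lemma Psi_eq_mul_Psi_one (g : ℝ → ℝ) (n k : ℕ) (t : ℝ) :
    Psi f g n k t = g t * Psi f 1 n k t := by
  simp only [Psi, Pi.one_apply, one_mul]
  split_ifs <;> ring

lemma Psi_one_nonneg (hmono : Monotone (hFun f)) (n k : ℕ) {t : ℝ} (ht : 0 ≤ t) :
    0 ≤ Psi f 1 n k t := by
  simp only [Psi, Pi.one_apply, one_mul]
  split_ifs with _ hl hr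
  · exact div_nonneg (sub_nonneg.2 (hmono ht)) (Real.sqrt_nonneg _)
  · exact mul_nonneg (Real.sqrt_nonneg _) (sub_nonneg.2 (hmono hl.1))
  · exact mul_nonneg (Real.sqrt_nonneg _) (sub_nonneg.2 (hmono hr.2.le))
  · exact le_rfl

lemma lPt_nonneg (n k : ℕ) : 0 ≤ lPt n k := by unfold lPt; positivity

lemma lPt_lt_mPt (n k : ℕ) : lPt n k < mPt n k := by
  unfold lPt mPt; gcongr; linarith

lemma mPt_lt_rPt (n k : ℕ) : mPt n k < rPt n k := by
  unfold mPt rPt; gcongr; linarith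

lemma Psi_succ_eq_zero (g : ℝ → ℝ) (n k : ℕ) {t : ℝ}
    (ht : t < lPt (n + 1) k ∨ rPt (n + 1) k ≤ t) : Psi f g (n + 1) k t = 0 := by
  have hlm := lPt_lt_mPt (n + 1) k
  have hmr := mPt_lt_rPt (n + 1) k
  rw [Psi, if_neg n.succ_ne_zero, if_neg, if_neg] <;> rintro ⟨h₁, h₂⟩ <;>
    rcases ht with ht | ht <;> linarith

lemma Psi_succ_of_lt_mPt (g : ℝ → ℝ) (n k : ℕ) {t : ℝ} (hlt : lPt (n + 1) k ≤ t)
    (htm : t < mPt (n + 1) k) :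
    Psi f g (n + 1) k t = Lcoef f (n + 1) k * (g t * (hFun f t - hFun f (lPt (n + 1) k))) := by
  rw [Psi, if_neg n.succ_ne_zero, if_pos ⟨hlt, htm⟩]

/-- Beyond the support the factor `h r − h (min t r)` vanishes, so this covers `t ≥ r` too. -/
lemma Psi_succ_of_mPt_le (g : ℝ → ℝ) (n k : ℕ) {t : ℝ} (ht : mPt (n + 1) k ≤ t) :
    Psi f g (n + 1) k t =
      Rcoef f (n + 1) k * (g t * (hFun f (rPt (n + 1) k) - hFun f (min t (rPt (n + 1) k)))) := by
  rcases lt_or_ge t (rPt (n + 1) k) with htr | hrt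
  · rw [Psi, if_neg n.succ_ne_zero, if_neg (fun h => (not_lt.2 ht) h.2), if_pos ⟨ht, htr⟩,
      min_eq_left htr.le]
  · rw [Psi_succ_eq_zero g n k (Or.inr hrt), min_eq_right hrt, sub_self, mul_zero, mul_zero]

lemma lPt_succ (n k : ℕ) : lPt (n + 1) k = k / 2 ^ n := by
  rw [lPt, pow_succ]; field_simp

lemma rPt_succ (n k : ℕ) : rPt (n + 1) k = (k + 1) / 2 ^ n := by
  rw [rPt, pow_succ]; field_simp

lemma rPt_succ_le_one {n k : ℕ} (hk : k < 2 ^ n) : rPt (n + 1) k ≤ 1 := by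
  rw [rPt_succ, div_le_one (by positivity)]
  exact_mod_cast hk

/-- For `t ≥ 0` the dyadic interval of length `2⁻ᴺ` containing `t` is
`[lPt (N + 1) k, rPt (N + 1) k)` with `k = cellIdx N t`: the support of `Ψ_{N+1,k}`. -/
noncomputable def cellIdx (N : ℕ) (t : ℝ) : ℕ := ⌊2 ^ N * t⌋₊

lemma cellIdx_le (N : ℕ) {t : ℝ} (ht : 0 ≤ t) : (cellIdx N t : ℝ) ≤ 2 ^ N * t :=
  Nat.floor_le (by positivity)

lemma lt_cellIdx_add_one (N : ℕ) (t : ℝ) : 2 ^ N * t < cellIdx N t + 1 :=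
  Nat.lt_floor_add_one _

lemma cellIdx_lt {N : ℕ} {t : ℝ} (ht0 : 0 ≤ t) (ht1 : t < 1) : cellIdx N t < 2 ^ N := by
  rw [cellIdx, Nat.floor_lt (by positivity)]
  push_cast
  nlinarith [pow_pos (two_pos (α := ℝ)) N]

lemma cellIdx_zero {t : ℝ} (ht0 : 0 ≤ t) (ht1 : t < 1) : cellIdx 0 t = 0 := by
  simpa using cellIdx_lt (N := 0) ht0 ht1

lemma lPt_cellIdx_le (N : ℕ) {t : ℝ} (ht : 0 ≤ t) : lPt (N + 1) (cellIdx N t) ≤ t := by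
  rw [lPt_succ, div_le_iff₀ (by positivity), mul_comm]
  exact cellIdx_le N ht

lemma lt_rPt_cellIdx (N : ℕ) (t : ℝ) : t < rPt (N + 1) (cellIdx N t) := by
  rw [rPt_succ, lt_div_iff₀ (by positivity), mul_comm]
  exact lt_cellIdx_add_one N t

lemma sub_lt_lPt_cellIdx (N : ℕ) (t : ℝ) : t - (1 / 2) ^ N < lPt (N + 1) (cellIdx N t) := by
  rw [lPt_succ, lt_div_iff₀ (by positivity), sub_mul, div_pow, one_pow,
    div_mul_cancel₀ _ (by positivity), mul_comm]
  linarith [lt_cellIdx_add_one N t]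

lemma cellIdx_succ (N : ℕ) {t : ℝ} (ht : 0 ≤ t) :
    (t < mPt (N + 1) (cellIdx N t) ∧
        lPt (N + 2) (cellIdx (N + 1) t) = lPt (N + 1) (cellIdx N t) ∧
        rPt (N + 2) (cellIdx (N + 1) t) = mPt (N + 1) (cellIdx N t)) ∨
      (mPt (N + 1) (cellIdx N t) ≤ t ∧
        lPt (N + 2) (cellIdx (N + 1) t) = mPt (N + 1) (cellIdx N t) ∧
        rPt (N + 2) (cellIdx (N + 1) t) = rPt (N + 1) (cellIdx N t)) := by
  set K := cellIdx N t
  have hK := cellIdx_le N ht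
  have hK' := lt_cellIdx_add_one N t
  have hpow : (2 : ℝ) ^ (N + 1) = 2 * 2 ^ N := by ring
  rcases lt_or_ge t (mPt (N + 1) K) with htm | hmt
  · have hidx : cellIdx (N + 1) t = 2 * K := by
      rw [mPt, lt_div_iff₀ (by positivity), hpow] at htm
      rw [cellIdx, Nat.floor_eq_iff (by positivity), hpow]
      push_cast
      constructor <;> nlinarith
    refine Or.inl ⟨htm, ?_, ?_⟩
    · simp only [lPt, hidx]; push_cast; rw [pow_succ]; field_simp
    · simp only [rPt, mPt, hidx]; push_cast; rw [pow_succ]; field_simp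
  · have hidx : cellIdx (N + 1) t = 2 * K + 1 := by
      rw [mPt, div_le_iff₀ (by positivity), hpow] at hmt
      rw [cellIdx, Nat.floor_eq_iff (by positivity), hpow]
      push_cast
      constructor <;> nlinarith
    refine Or.inr ⟨hmt, ?_, ?_⟩
    · simp only [lPt, mPt, hidx]; push_cast; rw [pow_succ]; field_simp
    · simp only [rPt, hidx]; push_cast; rw [pow_succ]; field_simp; ring

lemma Psi_succ_eq_zero_of_ne_cellIdx (g : ℝ → ℝ) {N k : ℕ} {t : ℝ} (ht : 0 ≤ t)
    (hk : k ≠ cellIdx N t) : Psi f g (N + 1) k t = 0 := by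
  apply Psi_succ_eq_zero
  have hK := cellIdx_le N ht
  have hK' := lt_cellIdx_add_one N t
  rw [lPt_succ, rPt_succ, lt_div_iff₀ (by positivity), div_le_iff₀ (by positivity)]
  rcases hk.lt_or_gt with hk | hk
  · have : (k : ℝ) + 1 ≤ cellIdx N t := by exact_mod_cast hk
    right; nlinarith
  · have : (cellIdx N t : ℝ) + 1 ≤ k := by exact_mod_cast hk
    left; nlinarith

lemma Lcoef_mul_self {n k : ℕ} (hlm : hFun f (lPt n k) < hFun f (mPt n k))
    (hmr : hFun f (mPt n k) < hFun f (rPt n k)) : Lcoef f n k * Lcoef f n k =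
    (hFun f (rPt n k) - hFun f (mPt n k)) /
      ((hFun f (rPt n k) - hFun f (lPt n k)) * (hFun f (mPt n k) - hFun f (lPt n k))) :=
  Real.mul_self_sqrt (div_nonneg (by linarith) (mul_nonneg (by linarith) (by linarith)))

lemma Rcoef_mul_self {n k : ℕ} (hlm : hFun f (lPt n k) < hFun f (mPt n k))
    (hmr : hFun f (mPt n k) < hFun f (rPt n k)) : Rcoef f n k * Rcoef f n k =
    (hFun f (mPt n k) - hFun f (lPt n k)) /
      ((hFun f (rPt n k) - hFun f (lPt n k)) * (hFun f (rPt n k) - hFun f (mPt n k))) :=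
  Real.mul_self_sqrt (div_nonneg (by linarith) (mul_nonneg (by linarith) (by linarith)))

lemma Lcoef_mul_Rcoef {n k : ℕ} (hlm : hFun f (lPt n k) < hFun f (mPt n k))
    (hmr : hFun f (mPt n k) < hFun f (rPt n k)) :
    Lcoef f n k * Rcoef f n k = 1 / (hFun f (rPt n k) - hFun f (lPt n k)) := by
  rw [Lcoef, Rcoef,
    ← Real.sqrt_mul (div_nonneg (by linarith) (mul_nonneg (by linarith) (by linarith)))]
  have hml : hFun f (mPt n k) - hFun f (lPt n k) ≠ 0 := by linarith
  have hrm : hFun f (rPt n k) - hFun f (mPt n k) ≠ 0 := by linarith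
  rw [← Real.sqrt_sq (one_div_pos.2 (sub_pos.2 (hlm.trans hmr))).le]
  congr 1
  field_simp

/-- For `a ≤ t ≤ b`, on `s ≥ a` this interpolates `s ↦ h (min t s)` at `a` and `b`,
affinely in `h s` between them and constantly beyond `b`. -/
noncomputable def cellKernel (f : ℝ → ℝ) (a b t s : ℝ) : ℝ :=
  hFun f a + (hFun f t - hFun f a) * (hFun f (min s b) - hFun f a) / (hFun f b - hFun f a)

lemma cellKernel_lPt_mPt {n k : ℕ} (hlm : hFun f (lPt (n + 1) k) < hFun f (mPt (n + 1) k))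
    (hmr : hFun f (mPt (n + 1) k) < hFun f (rPt (n + 1) k)) {t s : ℝ}
    (hlt : lPt (n + 1) k ≤ t) (htm : t < mPt (n + 1) k) (hts : t ≤ s) :
    cellKernel f (lPt (n + 1) k) (mPt (n + 1) k) t s =
      cellKernel f (lPt (n + 1) k) (rPt (n + 1) k) t s +
        Psi f 1 (n + 1) k t * Psi f 1 (n + 1) k s := by
  have hml : hFun f (mPt (n + 1) k) - hFun f (lPt (n + 1) k) ≠ 0 := by linarith
  have hrl : hFun f (rPt (n + 1) k) - hFun f (lPt (n + 1) k) ≠ 0 := by linarith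
  rw [Psi_succ_of_lt_mPt 1 n k hlt htm, cellKernel, cellKernel]
  rcases lt_or_ge s (mPt (n + 1) k) with hsm | hms
  · rw [Psi_succ_of_lt_mPt 1 n k (hlt.trans hts) hsm, min_eq_left hsm.le,
      min_eq_left (hsm.trans (mPt_lt_rPt _ _)).le]
    simp only [Pi.one_apply, one_mul]
    rw [mul_mul_mul_comm, Lcoef_mul_self hlm hmr]
    field_simp
    ring
  · rw [Psi_succ_of_mPt_le 1 n k hms, min_eq_right hms]
    simp only [Pi.one_apply, one_mul]
    rw [mul_mul_mul_comm, Lcoef_mul_Rcoef hlm hmr]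
    field_simp
    ring

lemma cellKernel_mPt_rPt {n k : ℕ} (hlm : hFun f (lPt (n + 1) k) < hFun f (mPt (n + 1) k))
    (hmr : hFun f (mPt (n + 1) k) < hFun f (rPt (n + 1) k)) {t s : ℝ}
    (hmt : mPt (n + 1) k ≤ t) (htr : t < rPt (n + 1) k) (hts : t ≤ s) :
    cellKernel f (mPt (n + 1) k) (rPt (n + 1) k) t s =
      cellKernel f (lPt (n + 1) k) (rPt (n + 1) k) t s +
        Psi f 1 (n + 1) k t * Psi f 1 (n + 1) k s := by
  have hrm : hFun f (rPt (n + 1) k) - hFun f (mPt (n + 1) k) ≠ 0 := by linarith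
  have hrl : hFun f (rPt (n + 1) k) - hFun f (lPt (n + 1) k) ≠ 0 := by linarith
  rw [Psi_succ_of_mPt_le 1 n k hmt, Psi_succ_of_mPt_le 1 n k (hmt.trans hts),
    min_eq_left htr.le, cellKernel, cellKernel]
  simp only [Pi.one_apply, one_mul]
  rw [mul_mul_mul_comm, Rcoef_mul_self hlm hmr]
  field_simp
  ring

lemma hFun_one_pos (hmono : StrictMonoOn (hFun f) (Icc 0 1)) : 0 < hFun f 1 :=
  hFun_zero f ▸ hmono (left_mem_Icc.2 zero_le_one) (right_mem_Icc.2 zero_le_one) one_pos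

lemma Psi_one_zero_mul (h1 : 0 < hFun f 1) (k : ℕ) (t s : ℝ) :
    Psi f 1 0 k t * Psi f 1 0 k s = hFun f t * hFun f s / hFun f 1 := by
  simp only [Psi, if_pos, Pi.one_apply, one_mul, hFun_zero, sub_zero]
  rw [div_mul_div_comm, Real.mul_self_sqrt h1.le]

noncomputable def partialKernel (f : ℝ → ℝ) (N : ℕ) (t s : ℝ) : ℝ :=
  cellKernel f (lPt (N + 1) (cellIdx N t)) (rPt (N + 1) (cellIdx N t)) t s

lemma partialKernel_zero (hmono : StrictMonoOn (hFun f) (Icc 0 1)) {t s : ℝ} (ht0 : 0 ≤ t)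
    (ht1 : t < 1) (hs1 : s ≤ 1) :
    partialKernel f 0 t s = Psi f 1 0 0 t * Psi f 1 0 0 s := by
  rw [Psi_one_zero_mul (hFun_one_pos hmono), partialKernel, cellIdx_zero ht0 ht1, cellKernel]
  norm_num [lPt, rPt, hFun_zero, min_eq_left hs1]

lemma partialKernel_succ (hmono : StrictMonoOn (hFun f) (Icc 0 1)) {t s : ℝ} (ht0 : 0 ≤ t)
    (ht1 : t < 1) (hts : t ≤ s) (N : ℕ) :
    partialKernel f (N + 1) t s = partialKernel f N t s +
      ∑ k ∈ Finset.range (2 ^ N), Psi f 1 (N + 1) k t * Psi f 1 (N + 1) k s := by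
  set K := cellIdx N t
  have hK : K < 2 ^ N := cellIdx_lt ht0 ht1
  rw [Finset.sum_eq_single_of_mem K (Finset.mem_range.2 hK) fun k _ hk => by
    rw [Psi_succ_eq_zero_of_ne_cellIdx 1 ht0 hk, zero_mul]]
  have hlm := lPt_lt_mPt (N + 1) K
  have hmr := mPt_lt_rPt (N + 1) K
  have hl : lPt (N + 1) K ∈ Icc (0 : ℝ) 1 :=
    ⟨lPt_nonneg _ _, (lPt_cellIdx_le N ht0).trans ht1.le⟩
  have hr : rPt (N + 1) K ∈ Icc (0 : ℝ) 1 :=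
    ⟨hl.1.trans (hlm.trans hmr).le, rPt_succ_le_one hK⟩
  have hm : mPt (N + 1) K ∈ Icc (0 : ℝ) 1 := ⟨hl.1.trans hlm.le, hmr.le.trans hr.2⟩
  rcases cellIdx_succ N ht0 with ⟨htm, hl', hr'⟩ | ⟨hmt, hl', hr'⟩
  · rw [partialKernel, partialKernel, hl', hr']
    exact cellKernel_lPt_mPt (hmono hl hm hlm) (hmono hm hr hmr) (lPt_cellIdx_le N ht0) htm hts
  · rw [partialKernel, partialKernel, hl', hr']
    exact cellKernel_mPt_rPt (hmono hl hm hlm) (hmono hm hr hmr) hmt (lt_rPt_cellIdx N t) hts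

lemma sum_range_succ_eq_partialKernel (hmono : StrictMonoOn (hFun f) (Icc 0 1)) {t s : ℝ}
    (ht0 : 0 ≤ t) (ht1 : t < 1) (hts : t ≤ s) (hs1 : s ≤ 1) (N : ℕ) :
    ∑ n ∈ Finset.range (N + 1), ∑ k ∈ Finset.range (2 ^ (n - 1)),
      Psi f 1 n k t * Psi f 1 n k s = partialKernel f N t s := by
  induction N with
  | zero => simp [partialKernel_zero hmono ht0 ht1 hs1]
  | succ N ih =>
    rw [Finset.sum_range_succ, ih, partialKernel_succ hmono ht0 ht1 hts, Nat.add_sub_cancel]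

lemma cellKernel_mem_Icc (hmono : Monotone (hFun f)) {a b t s : ℝ} (hat : a ≤ t) (htb : t ≤ b)
    (hts : t ≤ s) : cellKernel f a b t s ∈ Icc (hFun f a) (hFun f t) := by
  have hX : 0 ≤ hFun f t - hFun f a := sub_nonneg.2 (hmono hat)
  have hρ0 : 0 ≤ (hFun f (min s b) - hFun f a) / (hFun f b - hFun f a) :=
    div_nonneg (sub_nonneg.2 (hmono (le_min (hat.trans hts) (hat.trans htb))))
      (sub_nonneg.2 (hmono (hat.trans htb)))
  have hρ1 : (hFun f (min s b) - hFun f a) / (hFun f b - hFun f a) ≤ 1 :=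
    div_le_one_of_le₀ (sub_le_sub_right (hmono (min_le_right _ _)) _)
      (sub_nonneg.2 (hmono (hat.trans htb)))
  rw [cellKernel, mul_div_assoc]
  constructor
  · linarith [mul_nonneg hX hρ0]
  · linarith [mul_le_of_le_one_right hX hρ1]

lemma tendsto_partialKernel (hf : Continuous f) {t s : ℝ} (ht0 : 0 ≤ t) (hts : t ≤ s) :
    Tendsto (fun N => partialKernel f N t s) atTop (𝓝 (hFun f t)) := by
  have hgeom : Tendsto (fun N : ℕ => t - (1 / 2 : ℝ) ^ N) atTop (𝓝 t) := by
    simpa using tendsto_const_nhds.sub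
      (tendsto_pow_atTop_nhds_zero_of_lt_one (by norm_num : (0 : ℝ) ≤ 1 / 2) (by norm_num))
  have hl : Tendsto (fun N => lPt (N + 1) (cellIdx N t)) atTop (𝓝 t) :=
    tendsto_of_tendsto_of_tendsto_of_le_of_le hgeom tendsto_const_nhds
      (fun N => (sub_lt_lPt_cellIdx N t).le) (fun N => lPt_cellIdx_le N ht0)
  exact tendsto_of_tendsto_of_tendsto_of_le_of_le (((hFun_continuous hf).tendsto t).comp hl)
    tendsto_const_nhds
    (fun N => (cellKernel_mem_Icc (hFun_monotone hf) (lPt_cellIdx_le N ht0)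
      (lt_rPt_cellIdx N t).le hts).1)
    (fun N => (cellKernel_mem_Icc (hFun_monotone hf) (lPt_cellIdx_le N ht0)
      (lt_rPt_cellIdx N t).le hts).2)

lemma hasSum_Psi_one_of_lt_one (hf : Continuous f) (hmono : StrictMonoOn (hFun f) (Icc 0 1))
    {t s : ℝ} (ht0 : 0 ≤ t) (ht1 : t < 1) (hts : t ≤ s) (hs1 : s ≤ 1) :
    HasSum (fun n : ℕ => ∑ k ∈ Finset.range (2 ^ (n - 1)), Psi f 1 n k t * Psi f 1 n k s)
      (hFun f t) := by
  have hnonneg n k {x : ℝ} (hx : 0 ≤ x) := Psi_one_nonneg (hFun_monotone hf) n k hx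
  rw [hasSum_iff_tendsto_nat_of_nonneg (fun n => Finset.sum_nonneg fun k _ =>
      mul_nonneg (hnonneg n k ht0) (hnonneg n k (ht0.trans hts))),
    ← tendsto_add_atTop_iff_nat 1]
  simp only [sum_range_succ_eq_partialKernel hmono ht0 ht1 hts hs1]
  exact tendsto_partialKernel hf ht0 hts

lemma hasSum_Psi_one_at_one (hmono : StrictMonoOn (hFun f) (Icc 0 1)) :
    HasSum (fun n : ℕ => ∑ k ∈ Finset.range (2 ^ (n - 1)), Psi f 1 n k 1 * Psi f 1 n k 1)
      (hFun f 1) := by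
  convert hasSum_single 0 fun n hn => ?_ using 1
  · simp [Psi_one_zero_mul (hFun_one_pos hmono), (hFun_one_pos hmono).ne']
  · obtain ⟨n, rfl⟩ := Nat.exists_eq_succ_of_ne_zero hn
    refine Finset.sum_eq_zero fun k hk => ?_
    rw [Psi_succ_eq_zero 1 n k (Or.inr (rPt_succ_le_one (by simpa using hk))), zero_mul]

lemma hasSum_Psi_one (hf : Continuous f) (hmono : StrictMonoOn (hFun f) (Icc 0 1)) {t s : ℝ}
    (ht : t ∈ Icc (0 : ℝ) 1) (hs : s ∈ Icc (0 : ℝ) 1) :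
    HasSum (fun n : ℕ => ∑ k ∈ Finset.range (2 ^ (n - 1)), Psi f 1 n k t * Psi f 1 n k s)
      (hFun f (min t s)) := by
  wlog hts : t ≤ s generalizing t s
  · simpa only [mul_comm (Psi f 1 _ _ s), min_comm] using this hs ht (le_of_not_ge hts)
  rw [min_eq_left hts]
  -- `1` lies in no dyadic interval of `[0, 1)`, so only the level-`0` term survives there
  rcases ht.2.lt_or_eq with ht1 | rfl
  · exact hasSum_Psi_one_of_lt_one hf hmono ht.1 ht1 hts hs.2
  · obtain rfl : s = 1 := le_antisymm hs.2 hts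
    exact hasSum_Psi_one_at_one hmono

end PsiParseval

theorem Psi_parseval_general
    (f g : ℝ → ℝ) (hf : Continuous f)
    (hmono : StrictMonoOn (hFun f) (Set.Icc 0 1)) :
    ∀ t ∈ Set.Icc (0:ℝ) 1, ∀ s ∈ Set.Icc (0:ℝ) 1,
      HasSum (fun n : ℕ => ∑ k ∈ Finset.range (2 ^ (n - 1)),
          Psi f g n k t * Psi f g n k s)
        (g t * g s * hFun f (min t s)) := by
  intro t ht s hs
  simp_rw [PsiParseval.Psi_eq_mul_Psi_one g, mul_mul_mul_comm (g t), ← Finset.mul_sum]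
  exact (PsiParseval.hasSum_Psi_one hf hmono ht hs).mul_left (g t * g s)

/-- the Parseval identity for the basis `(Φ_{n,k})` gives, for
`t, s ∈ [0,1]`,
`Σ_{n,k} Ψ_{n,k}(t)·Ψ_{n,k}(s) = (η_t, η_s) = g t · g s · h (min t s)`. -/
theorem Psi_parseval
    (f g : ℝ → ℝ) (hf : Continuous f) (hg : Continuous g)
    (hmono : StrictMonoOn (hFun f) (Set.Icc 0 1)) :
    ∀ t ∈ Set.Icc (0:ℝ) 1, ∀ s ∈ Set.Icc (0:ℝ) 1,
      HasSum (fun n : ℕ => ∑ k ∈ Finset.range (2 ^ (n - 1)),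
          Psi f g n k t * Psi f g n k s)
        (g t * g s * hFun f (min t s)) :=
  Psi_parseval_general f g hf hmono
end
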